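/- Let the Σ₂ family {p₀, p₂, p₃, p₄, …} be multiplicatively closed with z² p_j in its ℂ-linear span for every j. Then for every n ≥ 1, in ℂ((z⁻¹)) with λ = z²: p_{2n+1}² = (λ^{n−1} − ∑_{i=0}^{n−2} H^{2(n−i)−1}_{−1} λ^i)² · (λ³ + 2H³₋₁ λ² + ((H³₋₁)² + 2H³₁) λ + 2H³₋₁ H³₁ + 2H³₃); i.e. each pair (λ, p_{2n+1}) satisfies a singular hyperelliptic curve equation of genus 1. -/

import Mathlib

open Finset

noncomputable section

/-- `z^j` viewed as a formal Laurent series in `t = z⁻¹` (so `z^j = t^(-j)`). -/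
def zp (j : ℤ) : LaurentSeries ℂ := HahnSeries.single (-j) 1

/-- The element `p₀ = 1 + ∑_{k ≥ 1} H^0_k z^(-k)` of the `Σ₂` family. -/
def sigma2zero (H : ℕ → ℤ → ℂ) : LaurentSeries ℂ :=
  1 + HahnSeries.ofPowerSeries ℤ ℂ (PowerSeries.mk fun k => if 1 ≤ k then H 0 (k:ℤ) else 0)

/-- The elements `p_j = z^j + H^j_{-1} z + ∑_{k ≥ 1} H^j_k z^(-k)`, `j ≥ 2`, of the `Σ₂`
family. -/
def sigma2 (H : ℕ → ℤ → ℂ) (j : ℕ) : LaurentSeries ℂ :=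
  zp j + H j (-1) • zp 1
    + HahnSeries.ofPowerSeries ℤ ℂ (PowerSeries.mk fun k => if 1 ≤ k then H j (k:ℤ) else 0)

/-- The `Σ₂` family `{p₀, p₂, p₃, p₄, …}` as a set of Laurent series. -/
def sigma2Set (H : ℕ → ℤ → ℂ) : Set (LaurentSeries ℂ) :=
  insert (sigma2zero H) (sigma2 H '' {j | 2 ≤ j})

/-!
An element of the span of the family is determined by its coefficients at `z^j`, `j = 0` or
`j ≥ 2`, since `p_j` is the only member with a `z^j` term. Comparing these coefficients gives
`p₀ = 1`, the recursion `z² p_j = p_{j+2} + H^j_{-1} p₃ + H^j_2` and `p₃² = R(z²)` for the cubic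
`R`. The substitution `z ↦ -z` fixes `R(z²)`, so it sends `p₃` to `±p₃`, and the leading term
rules out `+`. Hence `p₃` is odd, `H^j_2 = 0` for odd `j`, and the recursion yields
`p_{2n+1} = B_n(z²) p₃` with `B_n` the polynomial of the statement.
-/

theorem eq_zero_of_mem_span_of_biorthogonal {ι K M : Type*} [Semiring K] [AddCommMonoid M]
    [Module K M] {v : ι → M} (φ : ι → M →ₗ[K] K) (hφ : ∀ i, φ i (v i) = 1)
    (hφ' : ∀ i j, i ≠ j → φ i (v j) = 0) {x : M} (hx : x ∈ Submodule.span K (Set.range v))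
    (h : ∀ i, φ i x = 0) : x = 0 := by
  classical
  obtain ⟨c, rfl⟩ := Finsupp.mem_span_range_iff_exists_finsupp.mp hx
  have hc : c = 0 := by
    ext i
    rw [Finsupp.coe_zero, Pi.zero_apply, ← h i, Finsupp.sum, map_sum, Finset.sum_eq_single i]
    · simp [hφ]
    · intro j _ hji
      simp [hφ' i j hji.symm]
    · intro hi
      simp [Finsupp.notMem_support_iff.mp hi]
  simp [hc]

namespace LaurentSeries

variable {R : Type*} [CommRing R]

def negVarFun (x : LaurentSeries R) : LaurentSeries R where
  coeff := (fun n : ℤ => n.negOnePow) • x.coeff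
  isPWO_support' := x.isPWO_support'.mono (Function.support_smul_subset_right _ _)

lemma coeff_negVarFun (x : LaurentSeries R) (n : ℤ) :
    (negVarFun x).coeff n = n.negOnePow • x.coeff n := rfl

lemma support_negVarFun_subset (x : LaurentSeries R) : (negVarFun x).support ⊆ x.support :=
  Function.support_smul_subset_right _ _

/-- The substitution `X ↦ -X`. -/
def negVar : LaurentSeries R →+* LaurentSeries R where
  toFun := negVarFun
  map_one' := by ext n; by_cases h : n = 0 <;> simp [coeff_negVarFun, HahnSeries.coeff_one, h]
  map_mul' x y := by
    ext a
    rw [HahnSeries.coeff_mul_left' x.isPWO_support (support_negVarFun_subset x),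
      coeff_negVarFun, HahnSeries.coeff_mul, Finset.smul_sum]
    symm
    refine Finset.sum_subset (Finset.antidiagonal_mono_right (support_negVarFun_subset y))
      (fun ij hxy hij => ?_) |>.trans (Finset.sum_congr rfl fun ij hij => ?_)
    · obtain ⟨hi, -, hsum⟩ := Finset.mem_antidiagonal.mp hxy
      have : (negVarFun y).coeff ij.2 = 0 :=
        by_contra fun hj => hij (Finset.mem_antidiagonal.mpr ⟨hi, hj, hsum⟩)
      rw [this, mul_zero]
    · rw [← (Finset.mem_antidiagonal.mp hij).2.2, coeff_negVarFun, coeff_negVarFun,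
        Int.negOnePow_add, smul_mul_smul_comm, mul_smul]
  map_zero' := by ext; simp [coeff_negVarFun]
  map_add' x y := by ext; simp [coeff_negVarFun]

@[simp]
lemma coeff_negVar (x : LaurentSeries R) (n : ℤ) :
    (negVar x).coeff n = n.negOnePow • x.coeff n := rfl

lemma negVar_single (n : ℤ) (r : R) :
    negVar (HahnSeries.single n r) = n.negOnePow • HahnSeries.single n r := by
  ext m
  by_cases h : m = n <;> simp [h]

lemma negVar_smul (c : R) (x : LaurentSeries R) : negVar (c • x) = c • negVar x := by
  ext n
  simp [mul_smul_comm]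

lemma negVar_C (c : R) : negVar (HahnSeries.C c) = HahnSeries.C c := by
  rw [HahnSeries.C_apply, negVar_single, Int.negOnePow_zero, one_smul]

lemma coeff_eq_zero_of_negVar_eq_neg [NoZeroDivisors R] [CharZero R] {x : LaurentSeries R}
    (hx : negVar x = -x) {n : ℤ} (hn : Even n) : x.coeff n = 0 := by
  have := congrArg (HahnSeries.coeff · n) hx
  simpa [Int.negOnePow_even n hn, CharZero.eq_neg_self_iff] using this

lemma coeff_C (c : R) (e : ℤ) :
    (HahnSeries.C c : LaurentSeries R).coeff e = if e = 0 then c else 0 := by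
  simp [HahnSeries.C_apply, HahnSeries.coeff_single]

lemma coeff_C_mul (c : R) (x : LaurentSeries R) (e : ℤ) :
    (HahnSeries.C c * x).coeff e = c * x.coeff e := by
  rw [HahnSeries.C_mul_eq_smul, HahnSeries.coeff_smul, smul_eq_mul]

end LaurentSeries

open HahnSeries LaurentSeries

lemma coeff_zp (j e : ℤ) : (zp j).coeff e = if e = -j then 1 else 0 := by
  simp [zp, coeff_single]

lemma zp_add (m n : ℤ) : zp (m + n) = zp m * zp n := by
  rw [zp, zp, zp, single_mul_single, mul_one, neg_add]

lemma coeff_zp_mul (j : ℤ) (x : LaurentSeries ℂ) (e : ℤ) :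
    (zp j * x).coeff e = x.coeff (e + j) := by
  rw [zp]
  simpa using coeff_single_mul_add (r := (1 : ℂ)) (x := x) (a := e + j) (b := -j)

lemma zp_two_pow (k : ℕ) : zp 2 ^ k = zp (2 * k) := by
  induction k with
  | zero => simp [zp]
  | succ k ih => rw [pow_succ, ih, ← zp_add]; push_cast; ring_nf

lemma negVar_zp (j : ℤ) : negVar (zp j) = j.negOnePow • zp j := by
  rw [zp, negVar_single, Int.negOnePow_neg]

lemma negVar_zp_two : negVar (zp 2) = zp 2 := by
  rw [negVar_zp, Int.negOnePow_even 2 even_two, one_smul]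

section Coefficients

variable (H : ℕ → ℤ → ℂ)

def sigma2Tail (j : ℕ) : LaurentSeries ℂ :=
  ofPowerSeries ℤ ℂ (PowerSeries.mk fun k => if 1 ≤ k then H j (k:ℤ) else 0)

lemma sigma2_eq (j : ℕ) : sigma2 H j = zp j + H j (-1) • zp 1 + sigma2Tail H j := rfl

lemma sigma2zero_eq : sigma2zero H = 1 + sigma2Tail H 0 := rfl

lemma coeff_sigma2Tail (j : ℕ) (e : ℤ) :
    (sigma2Tail H j).coeff e = if 1 ≤ e then H j e else 0 := by
  rcases le_or_gt 0 e with he | he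
  · lift e to ℕ using he
    simp [sigma2Tail]
  · simp [sigma2Tail, PowerSeries.coeff_coe, he, not_le.mpr (he.trans zero_lt_one)]

lemma coeff_sigma2Tail_mul_of_nonpos (i j : ℕ) {e : ℤ} (he : e ≤ 0) :
    (sigma2Tail H i * sigma2Tail H j).coeff e = 0 := by
  rw [sigma2Tail, sigma2Tail, ← map_mul, PowerSeries.coeff_coe]
  split_ifs
  · rfl
  · obtain rfl : e = 0 := by omega
    simp [PowerSeries.coeff_mul]

lemma coeff_sigma2 (j : ℕ) (e : ℤ) :
    (sigma2 H j).coeff e = (if e = -j then 1 else 0) + (if e = -1 then H j (-1) else 0)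
      + if 1 ≤ e then H j e else 0 := by
  simp [sigma2_eq, coeff_zp, coeff_sigma2Tail]

lemma coeff_sigma2_of_pos (j : ℕ) {e : ℤ} (he : 0 < e) : (sigma2 H j).coeff e = H j e := by
  rw [coeff_sigma2, if_neg (by omega), if_neg (by omega), if_pos (by omega), zero_add, zero_add]

lemma coeff_sigma2zero (e : ℤ) :
    (sigma2zero H).coeff e = (if e = 0 then 1 else 0) + if 1 ≤ e then H 0 e else 0 := by
  simp [sigma2zero_eq, coeff_sigma2Tail, coeff_one]

lemma sigma2zero_mem : sigma2zero H ∈ sigma2Set H := Set.mem_insert _ _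

lemma sigma2_mem {j : ℕ} (hj : 2 ≤ j) : sigma2 H j ∈ sigma2Set H :=
  Set.mem_insert_of_mem _ ⟨j, hj, rfl⟩

def sigma2Family : Option ℕ → LaurentSeries ℂ
  | none => sigma2zero H
  | some k => sigma2 H (k + 2)

/-- The exponent of `t = z⁻¹` in the leading term of `sigma2Family H i`. -/
def sigma2LeadingExp : Option ℕ → ℤ
  | none => 0
  | some k => -(k + 2)

lemma range_sigma2Family : Set.range (sigma2Family H) = sigma2Set H := by
  ext x
  constructor
  · rintro ⟨_ | k, rfl⟩
    · exact sigma2zero_mem H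
    · exact sigma2_mem H (by omega)
  · rintro (rfl | ⟨j, hj, rfl⟩)
    · exact ⟨none, rfl⟩
    · obtain ⟨k, rfl⟩ := Nat.exists_eq_add_of_le' (show 2 ≤ j from hj)
      exact ⟨some k, rfl⟩

lemma coeff_sigma2Family_leadingExp (i j : Option ℕ) :
    (sigma2Family H j).coeff (sigma2LeadingExp i) = if i = j then 1 else 0 := by
  rcases i with _ | k <;> rcases j with _ | l <;>
    simp [sigma2Family, sigma2LeadingExp, coeff_sigma2, coeff_sigma2zero]
  all_goals first | omega | (split_ifs <;> first | omega | simp)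

end Coefficients

theorem eq_of_mem_span_sigma2Set {H : ℕ → ℤ → ℂ} {x y : LaurentSeries ℂ}
    (hx : x ∈ Submodule.span ℂ (sigma2Set H)) (hy : y ∈ Submodule.span ℂ (sigma2Set H))
    (h : ∀ e ≤ 0, e ≠ -1 → x.coeff e = y.coeff e) : x = y := by
  rw [← sub_eq_zero]
  refine eq_zero_of_mem_span_of_biorthogonal (v := sigma2Family H)
    (fun i => coeff.linearMap (sigma2LeadingExp i)) (fun i => ?_) (fun i j hij => ?_) ?_ fun i => ?_
  · simp [coeff_sigma2Family_leadingExp]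
  · simp [coeff_sigma2Family_leadingExp, hij]
  · rw [range_sigma2Family]
    exact sub_mem hx hy
  · change (x - y).coeff _ = 0
    rw [coeff_sub, sub_eq_zero]
    apply h <;> cases i <;> simp only [sigma2LeadingExp] <;> omega

def sigma2Cubic (H : ℕ → ℤ → ℂ) : LaurentSeries ℂ :=
  zp 2 ^ 3 + (2 * H 3 (-1)) • zp 2 ^ 2 + ((H 3 (-1))^2 + 2 * H 3 1) • zp 2
    + C (2 * H 3 (-1) * H 3 1 + 2 * H 3 3)

def sigma2OddFactor (H : ℕ → ℤ → ℂ) (n : ℕ) : LaurentSeries ℂ :=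
  zp 2 ^ (n-1) - ∑ i ∈ range (n-1), H (2*(n-i)-1) (-1) • zp 2 ^ i

lemma negVar_sigma2Cubic (H : ℕ → ℤ → ℂ) : negVar (sigma2Cubic H) = sigma2Cubic H := by
  simp only [sigma2Cubic, map_add, map_pow, negVar_smul, negVar_zp_two, negVar_C]

lemma negVar_sigma2OddFactor (H : ℕ → ℤ → ℂ) (n : ℕ) :
    negVar (sigma2OddFactor H n) = sigma2OddFactor H n := by
  simp [sigma2OddFactor, negVar_smul, negVar_zp_two]

lemma sigma2OddFactor_succ (H : ℕ → ℤ → ℂ) {n : ℕ} (hn : 1 ≤ n) :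
    sigma2OddFactor H (n + 1) = zp 2 * sigma2OddFactor H n - C (H (2 * n + 1) (-1)) := by
  obtain ⟨k, rfl⟩ := Nat.exists_eq_add_of_le' hn
  simp only [sigma2OddFactor, Nat.add_sub_cancel, ← C_mul_eq_smul]
  rw [Finset.sum_range_succ', mul_sub, Finset.mul_sum]
  have hterm : ∀ i ∈ range k, C (H (2 * (k + 1 + 1 - (i + 1)) - 1) (-1)) * zp 2 ^ (i + 1)
      = zp 2 * (C (H (2 * (k + 1 - i) - 1) (-1)) * zp 2 ^ i) := fun i _ => by
    rw [Nat.add_sub_add_right]; ring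
  rw [Finset.sum_congr rfl hterm, show 2 * (k + 1 + 1 - 0) - 1 = 2 * (k + 1) + 1 by omega]
  ring

section MultiplicativelyClosed

variable {H : ℕ → ℤ → ℂ}
  (hmul : ∀ x ∈ sigma2Set H, ∀ y ∈ sigma2Set H, x * y ∈ Submodule.span ℂ (sigma2Set H))
  (hz2 : ∀ x ∈ sigma2Set H, zp 2 * x ∈ Submodule.span ℂ (sigma2Set H))

include hmul in
theorem sigma2zero_eq_one : sigma2zero H = 1 := by
  have hsq : sigma2zero H * sigma2zero H = sigma2zero H := by
    refine eq_of_mem_span_sigma2Set (hmul _ (sigma2zero_mem H) _ (sigma2zero_mem H))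
      (Submodule.subset_span (sigma2zero_mem H)) fun e he _ => ?_
    have hT : (sigma2Tail H 0).coeff e = 0 := by
      rw [coeff_sigma2Tail, if_neg (by omega)]
    rw [sigma2zero_eq, mul_add, add_mul, add_mul]
    simp only [one_mul, mul_one, coeff_add, coeff_sigma2Tail_mul_of_nonpos H 0 0 he, hT,
      add_zero]
  have hne : sigma2zero H ≠ 0 := fun h => by
    simpa [h] using coeff_sigma2zero H 0
  exact (mul_eq_left₀ hne).mp hsq

include hmul in
lemma C_mem_span (c : ℂ) : C c ∈ Submodule.span ℂ (sigma2Set H) := by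
  rw [← mul_one (C c), C_mul_eq_smul, ← sigma2zero_eq_one hmul]
  exact Submodule.smul_mem _ c (Submodule.subset_span (sigma2zero_mem H))

include hz2 in
lemma zp_two_mul_mem_span {x : LaurentSeries ℂ} (hx : x ∈ Submodule.span ℂ (sigma2Set H)) :
    zp 2 * x ∈ Submodule.span ℂ (sigma2Set H) := by
  induction hx using Submodule.span_induction with
  | mem x hx => exact hz2 x hx
  | zero => simp
  | add x y _ _ hx hy => rw [mul_add]; exact add_mem hx hy
  | smul c x _ hx =>
    rw [← C_mul_eq_smul, mul_left_comm, C_mul_eq_smul]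
    exact Submodule.smul_mem _ c hx

include hmul hz2

lemma zp_two_pow_mem_span (k : ℕ) : zp 2 ^ k ∈ Submodule.span ℂ (sigma2Set H) := by
  induction k with
  | zero => simpa using C_mem_span hmul 1
  | succ k ih => rw [pow_succ']; exact zp_two_mul_mem_span hz2 ih

theorem zp_two_mul_sigma2 {j : ℕ} (hj : 2 ≤ j) :
    zp 2 * sigma2 H j = sigma2 H (j + 2) + H j (-1) • sigma2 H 3 + C (H j 2) := by
  have hmem (i : ℕ) (hi : 2 ≤ i) := Submodule.subset_span (R := ℂ) (sigma2_mem H hi)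
  refine eq_of_mem_span_sigma2Set (zp_two_mul_mem_span hz2 (hmem j hj))
    (add_mem (add_mem (hmem _ (by omega)) (Submodule.smul_mem _ _ (hmem 3 (by norm_num))))
      (C_mem_span hmul _)) fun e he he1 => ?_
  simp only [coeff_zp_mul, coeff_add, coeff_smul, coeff_sigma2, coeff_C, smul_eq_mul]
  split_ifs <;> first | omega | (subst_vars; simp)

lemma sigma2Cubic_mem_span : sigma2Cubic H ∈ Submodule.span ℂ (sigma2Set H) := by
  have hpow := zp_two_pow_mem_span hmul hz2
  refine add_mem (add_mem (add_mem (hpow 3) (Submodule.smul_mem _ _ (hpow 2)))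
    (Submodule.smul_mem _ _ ?_)) (C_mem_span hmul _)
  simpa using hpow 1

theorem sigma2_three_sq : sigma2 H 3 ^ 2 = sigma2Cubic H := by
  have h3 : sigma2 H 3 ∈ sigma2Set H := sigma2_mem H (by norm_num)
  refine eq_of_mem_span_sigma2Set (sq (sigma2 H 3) ▸ hmul _ h3 _ h3)
    (sigma2Cubic_mem_span hmul hz2) fun e he he1 => ?_
  have hp : sigma2 H 3 = zp 3 + C (H 3 (-1)) * zp 1 + sigma2Tail H 3 := by
    rw [C_mul_eq_smul]; rfl
  have hexp : sigma2 H 3 ^ 2 = zp 3 * sigma2 H 3 + C (H 3 (-1)) * (zp 1 * sigma2 H 3)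
      + (zp 3 * sigma2Tail H 3 + C (H 3 (-1)) * (zp 1 * sigma2Tail H 3)
        + sigma2Tail H 3 * sigma2Tail H 3) := by
    linear_combination (sigma2 H 3 + sigma2Tail H 3) * hp
  rw [hexp]
  simp only [sigma2Cubic, zp_two_pow, coeff_zp_mul, coeff_add, coeff_smul, coeff_C_mul,
    coeff_sigma2, coeff_sigma2Tail, coeff_sigma2Tail_mul_of_nonpos H 3 3 he, coeff_C, coeff_zp,
    smul_eq_mul]
  split_ifs <;> first | omega | (subst_vars; norm_num <;> ring)

theorem negVar_sigma2_three : negVar (sigma2 H 3) = -sigma2 H 3 := by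
  have hsq : negVar (sigma2 H 3) ^ 2 = sigma2 H 3 ^ 2 := by
    rw [← map_pow, sigma2_three_sq hmul hz2, negVar_sigma2Cubic]
  refine (sq_eq_sq_iff_eq_or_eq_neg.mp hsq).resolve_left fun h => ?_
  have := congrArg (coeff · (-3)) h
  rw [coeff_negVar, Int.negOnePow_odd (-3) (by decide), Units.neg_smul, one_smul] at this
  norm_num [coeff_sigma2] at this

theorem sigma2_two_mul_add_one {n : ℕ} (hn : 1 ≤ n) :
    sigma2 H (2 * n + 1) = sigma2OddFactor H n * sigma2 H 3 := by
  induction n, hn using Nat.le_induction with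
  | base => simp [sigma2OddFactor]
  | succ n hn ih =>
    have hodd : negVar (sigma2 H (2 * n + 1)) = -sigma2 H (2 * n + 1) := by
      rw [ih, map_mul, negVar_sigma2OddFactor, negVar_sigma2_three hmul hz2, mul_neg]
    have h2 : H (2 * n + 1) 2 = 0 := by
      rw [← coeff_sigma2_of_pos H _ two_pos]
      exact coeff_eq_zero_of_negVar_eq_neg hodd even_two
    have hrec := zp_two_mul_sigma2 hmul hz2 (j := 2 * n + 1) (by omega)
    rw [h2, C_zero, add_zero, ih, ← C_mul_eq_smul] at hrec
    rw [show 2 * (n + 1) + 1 = 2 * n + 1 + 2 by ring, sigma2OddFactor_succ H hn]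
    linear_combination -hrec

end MultiplicativelyClosed

open Finset in
/-- Each pair `(λ, p_{2n+1})`, `λ = z²`, satisfies a singular hyperelliptic curve
equation of genus `1`. -/
theorem sigma2_singular_hyperelliptic (H : ℕ → ℤ → ℂ)
    (hmul : ∀ x ∈ sigma2Set H, ∀ y ∈ sigma2Set H, x * y ∈ Submodule.span ℂ (sigma2Set H))
    (hz2 : ∀ x ∈ sigma2Set H, zp 2 * x ∈ Submodule.span ℂ (sigma2Set H)) :
    ∀ n : ℕ, 1 ≤ n →
      sigma2 H (2*n+1) ^ 2
        = (zp 2 ^ (n-1) - ∑ i ∈ range (n-1), H (2*(n-i)-1) (-1) • zp 2 ^ i) ^ 2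
          * (zp 2 ^ 3 + (2 * H 3 (-1)) • zp 2 ^ 2
              + ((H 3 (-1))^2 + 2 * H 3 1) • zp 2
              + HahnSeries.C (2 * H 3 (-1) * H 3 1 + 2 * H 3 3)) := by
  intro n hn
  rw [sigma2_two_mul_add_one hmul hz2 hn, mul_pow, sigma2_three_sq hmul hz2]
  rfl

end
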